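/- Let n ≥ 1 and let A be an n×n integer matrix with det A ≠ 0; set d := |det A|. Let β : Fin d → ℤⁿ be such that the induced map Fin d → ℤⁿ/A(ℤⁿ), l ↦ β(l) + A(ℤⁿ), is a bijection, and let γ ∈ ℤⁿ. Then ∑_{l=0}^{d−1} e( (A⁻¹ β(l)) · γ ) equals d if γ ∈ Aᵀ(ℤⁿ), and equals 0 otherwise. Here A⁻¹ is the inverse of A as a real (or rational) matrix and · denotes the standard dot product. -/
import Mathlib

open scoped Classical

/-- The exponential function `e(r) = e^{2πir}`. -/
noncomputable def e (r : ℝ) : ℂ := Complex.exp (2 * Real.pi * Complex.I * r)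

lemma e_add (r s : ℝ) : e (r + s) = e r * e s := by
  simp [e, mul_add, Complex.exp_add]

lemma e_int (m : ℤ) : e m = 1 := by
  have : (2 * Real.pi * Complex.I * ((m : ℝ) : ℂ)) = (m : ℤ) * (2 * Real.pi * Complex.I) := by
    push_cast; ring
  rw [e, this, Complex.exp_int_mul_two_pi_mul_I]

lemma e_eq_one_iff (r : ℝ) : e r = 1 ↔ ∃ m : ℤ, r = m := by
  rw [e, Complex.exp_eq_one_iff]
  constructor
  · rintro ⟨m, hm⟩
    have h2 : (2 * Real.pi * Complex.I : ℂ) ≠ 0 := by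
      simp [Real.pi_ne_zero, Complex.I_ne_zero]
    have : (r : ℂ) = (m : ℂ) := by
      have hm' : (r : ℂ) * (2 * Real.pi * Complex.I) = (m : ℂ) * (2 * Real.pi * Complex.I) := by
        rw [← hm]; ring
      exact mul_right_cancel₀ h2 hm'
    exact ⟨m, by exact_mod_cast this⟩
  · rintro ⟨m, rfl⟩
    exact ⟨m, by push_cast; ring⟩

/-- Character-sum orthogonality: if `β : Fin d → ℤⁿ` is a
complete set of coset representatives for `ℤⁿ/A(ℤⁿ)` (with `d = |det A|`,
`det A ≠ 0`) and `γ ∈ ℤⁿ`, then `∑_{l} e((A⁻¹β_l)·γ)` equals `d` if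
`γ ∈ Aᵀ(ℤⁿ)` and `0` otherwise. -/
theorem stmt_8 (n : ℕ) (hn : 1 ≤ n) (A : Matrix (Fin n) (Fin n) ℤ)
    (hA : A.det ≠ 0) (d : ℕ) (hd : (d : ℤ) = |A.det|)
    (β : Fin d → (Fin n → ℤ))
    (hβ : Function.Bijective (fun l : Fin d =>
      (Submodule.Quotient.mk (β l) :
        (Fin n → ℤ) ⧸ LinearMap.range A.mulVecLin)))
    (γ : Fin n → ℤ) :
    ∑ l : Fin d,
      e (∑ i : Fin n,
        ((A.map (Int.cast : ℤ → ℝ))⁻¹.mulVec (fun i => (β l i : ℝ))) i * (γ i : ℝ)) =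
    if γ ∈ LinearMap.range (A.transpose).mulVecLin then (d : ℂ) else 0 := by
  set B : Matrix (Fin n) (Fin n) ℝ := A.map (Int.cast : ℤ → ℝ) with hB
  have hdetB : B.det = (A.det : ℝ) := (RingHom.map_det (Int.castRingHom ℝ) A).symm
  have hBunit : IsUnit B.det := by
    rw [hdetB]; exact isUnit_iff_ne_zero.mpr (by exact_mod_cast hA)
  have hBTunit : IsUnit B.transpose.det := by rwa [Matrix.det_transpose]
  -- cast helper
  have hcast : ∀ v : Fin n → ℤ, (fun i => ((A.mulVec v) i : ℝ)) = B.mulVec (fun i => (v i : ℝ)) := by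
    intro v; funext i
    simp [Matrix.mulVec, dotProduct, hB, Matrix.map_apply]
  set φ : (Fin n → ℤ) → ℝ := fun x => ∑ i, (B⁻¹.mulVec (fun i => (x i : ℝ))) i * (γ i : ℝ) with hφ
  have hφdot : ∀ x : (Fin n → ℤ), φ x = dotProduct (B⁻¹.mulVec (fun i => (x i : ℝ))) (fun i => (γ i : ℝ)) := by
    intro x; rfl
  have hφadd : ∀ x y, φ (x + y) = φ x + φ y := by
    intro x y
    have : (fun i => ((x + y) i : ℝ)) = (fun i => (x i : ℝ)) + (fun i => (y i : ℝ)) := by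
      funext i; push_cast; simp
    simp only [hφdot, this, Matrix.mulVec_add, add_dotProduct]
  have hφA : ∀ v : Fin n → ℤ, φ (A.mulVec v) = ((dotProduct v γ : ℤ) : ℝ) := by
    intro v
    rw [hφdot, hcast, Matrix.mulVec_mulVec, Matrix.nonsing_inv_mul B hBunit, Matrix.one_mulVec]
    push_cast [dotProduct]
    rfl
  -- descends to quotient
  have hdesc : ∀ a b : Fin n → ℤ,
      (Submodule.Quotient.mk a : (Fin n → ℤ) ⧸ LinearMap.range A.mulVecLin) = Submodule.Quotient.mk b →
      e (φ a) = e (φ b) := by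
    intro a b hab
    rw [Submodule.Quotient.eq] at hab
    obtain ⟨v, hv⟩ := hab
    have hv' : A.mulVec v = a - b := hv
    have ha : a = b + A.mulVec v := by rw [hv']; ring
    rw [ha, hφadd, e_add, hφA, e_int, mul_one]
  by_cases h : γ ∈ LinearMap.range (A.transpose).mulVecLin
  · rw [if_pos h]
    obtain ⟨w, hw⟩ := h
    have hw' : A.transpose.mulVec w = γ := hw
    have hterm : ∀ x : Fin n → ℤ, φ x = ((dotProduct x w : ℤ) : ℝ) := by
      intro x
      have hγ : (fun i => (γ i : ℝ)) = B.transpose.mulVec (fun i => (w i : ℝ)) := by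
        rw [← hw']
        funext i
        simp [Matrix.mulVec, dotProduct, hB, Matrix.map_apply, Matrix.transpose_apply]
      rw [hφdot, hγ, Matrix.dotProduct_mulVec, Matrix.vecMul_transpose,
        Matrix.mulVec_mulVec, Matrix.mul_nonsing_inv B hBunit, Matrix.one_mulVec]
      push_cast [dotProduct]
      rfl
    have : ∀ l : Fin d, e (φ (β l)) = 1 := by
      intro l; rw [hterm, e_int]
    calc ∑ l : Fin d, e (φ (β l)) = ∑ _l : Fin d, (1 : ℂ) := Finset.sum_congr rfl (fun l _ => this l)
      _ = (d : ℂ) := by simp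
  · rw [if_neg h]
    -- find x₀ with e (φ x₀) ≠ 1
    have hx : ∃ x₀ : Fin n → ℤ, e (φ x₀) ≠ 1 := by
      by_contra hc
      push_neg at hc
      have hm : ∀ j : Fin n, ∃ m : ℤ, φ (Pi.single j 1) = m := fun j => (e_eq_one_iff _).mp (hc _)
      choose m hmj using hm
      apply h
      refine ⟨m, ?_⟩
      have key : ∀ i, ((A.transpose.mulVec m) i : ℝ) = (γ i : ℝ) := by
        have hBm : B.transpose.mulVec (fun i => (m i : ℝ)) = (fun i => (γ i : ℝ)) := by
          have h1 : ∀ j, (B⁻¹.transpose.mulVec (fun i => (γ i : ℝ))) j = (m j : ℝ) := by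
            intro j
            rw [← hmj j]
            rw [hφdot]
            have : (fun i => ((Pi.single j 1 : Fin n → ℤ) i : ℝ)) = Pi.single j (1 : ℝ) := by
              funext i
              by_cases hij : i = j <;> simp [Pi.single_apply, hij]
            rw [this]
            simp [Matrix.mulVec, dotProduct, Matrix.transpose_apply, Pi.single_apply,
              Finset.sum_ite_eq', mul_comm]
          have h2 : B⁻¹.transpose.mulVec (fun i => (γ i : ℝ)) = (fun i => (m i : ℝ)) := by
            funext j; exact h1 j
          have h3 : B.transpose⁻¹ = B⁻¹.transpose := (Matrix.transpose_nonsing_inv B).symm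
          calc B.transpose.mulVec (fun i => (m i : ℝ))
              = B.transpose.mulVec (B.transpose⁻¹.mulVec (fun i => (γ i : ℝ))) := by rw [h3, h2]
            _ = (fun i => (γ i : ℝ)) := by
                rw [Matrix.mulVec_mulVec, Matrix.mul_nonsing_inv _ hBTunit, Matrix.one_mulVec]
        intro i
        rw [← congrFun hBm i]
        simp [Matrix.mulVec, dotProduct, hB, Matrix.map_apply, Matrix.transpose_apply]
      have : A.transpose.mulVec m = γ := by
        funext i
        exact_mod_cast key i
      exact this
    obtain ⟨x₀, hx₀⟩ := hx
    set q : Fin d ≃ ((Fin n → ℤ) ⧸ LinearMap.range A.mulVecLin) := Equiv.ofBijective _ hβ with hq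
    set σ : Fin d ≃ Fin d :=
      q.trans ((Equiv.addLeft (Submodule.Quotient.mk x₀ : (Fin n → ℤ) ⧸ LinearMap.range A.mulVecLin)).trans q.symm) with hσ
    have hkey : ∀ l : Fin d, e (φ (β (σ l))) = e (φ x₀) * e (φ (β l)) := by
      intro l
      have hql : q l = Submodule.Quotient.mk (β l) := rfl
      have h1 : (Submodule.Quotient.mk (β (σ l)) : (Fin n → ℤ) ⧸ LinearMap.range A.mulVecLin)
          = Submodule.Quotient.mk (x₀ + β l) := by
        have : q (σ l) = Submodule.Quotient.mk x₀ + q l := by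
          simp [hσ, Equiv.apply_symm_apply]
        rw [hql] at this
        have h2 : q (σ l) = Submodule.Quotient.mk (β (σ l)) := rfl
        rw [h2] at this
        rw [this]
        rfl
      rw [hdesc _ _ h1, hφadd, e_add]
    have hsum : ∑ l : Fin d, e (φ (β l)) = e (φ x₀) * ∑ l : Fin d, e (φ (β l)) := by
      rw [Finset.mul_sum]
      calc ∑ l : Fin d, e (φ (β l)) = ∑ l : Fin d, e (φ (β (σ l))) :=
            (Equiv.sum_comp σ (fun l => e (φ (β l)))).symm
        _ = ∑ l : Fin d, e (φ x₀) * e (φ (β l)) := Finset.sum_congr rfl (fun l _ => hkey l)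
    have : (e (φ x₀) - 1) * ∑ l : Fin d, e (φ (β l)) = 0 := by
      rw [sub_mul, one_mul, ← hsum, sub_self]
    rcases mul_eq_zero.mp this with h1 | h2
    · exact absurd (sub_eq_zero.mp h1) hx₀
    · exact h2
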